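/- In N = k+1 variables x_1,…,x_{k+1}, the following operator identity holds on the field F(x_1,…,x_{k+1}) of rational functions: (1−q^{−1})^{−1} M_{k+1}(−q^{−1}; q, t) ∘ (multiplication by e_k) = Σ_{I ⊆ {1,…,k+1}, |I| = k} (multiplication by Ã_I(x;t) x_I) ∘ M_I(−t; q, t) + (q−1)^{−1} (multiplication by e_k) ∘ M_{k+1}(−1; q, t), where Ã_I(x;t) = t^{−k} ∏_{i∈I, j∉I} (t x_i − x_j)/(x_i − x_j) and x_I = ∏_{i∈I} x_i. Equivalently, B_k^+ = B̃_k^+ + (q−1)^{−1} e_k M_{k+1}(−1; q, t) when N = k+1. (Here q ≠ 1.) -/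

import Mathlib

set_option maxHeartbeats 2000000
set_option synthInstance.maxHeartbeats 400000


open MvPolynomial Finset

noncomputable section

variable {F : Type*} [Field F]

/-- The field `F(x_1, …, x_N)` of rational functions in `N` variables. -/
abbrev RatFunc' (N : ℕ) (F : Type*) [Field F] := FractionRing (MvPolynomial (Fin N) F)

/-- The algebra automorphism of `F[x_1,…,x_N]` multiplying `x_i` by `q` for `i ∈ S`. -/
def scaleAlg (N : ℕ) (q : F) (hq : q ≠ 0) (S : Finset (Fin N)) :
    MvPolynomial (Fin N) F ≃ₐ[F] MvPolynomial (Fin N) F :=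
  AlgEquiv.ofAlgHom
    (aeval fun i => if i ∈ S then MvPolynomial.C q * X i else X i)
    (aeval fun i => if i ∈ S then MvPolynomial.C q⁻¹ * X i else X i)
    (by
      apply MvPolynomial.algHom_ext
      intro i
      by_cases h : i ∈ S <;>
        simp [h, ← mul_assoc, ← MvPolynomial.C_mul, inv_mul_cancel₀ hq, mul_inv_cancel₀ hq])
    (by
      apply MvPolynomial.algHom_ext
      intro i
      by_cases h : i ∈ S <;>
        simp [h, ← mul_assoc, ← MvPolynomial.C_mul, inv_mul_cancel₀ hq, mul_inv_cancel₀ hq])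

/-- The shift operator `∏_{i ∈ S} T_{q,x_i}` on `F(x_1,…,x_N)`:
the field automorphism replacing `x_i` by `q x_i` for every `i ∈ S`. -/
def shiftOp (N : ℕ) (q : F) (hq : q ≠ 0) (S : Finset (Fin N)) :
    RatFunc' N F ≃+* RatFunc' N F :=
  IsFractionRing.ringEquivOfRingEquiv (scaleAlg N q hq S).toRingEquiv

/-- The variable `x_i` as an element of `F(x_1,…,x_N)`. -/
def xv {N : ℕ} (i : Fin N) : RatFunc' N F := algebraMap (MvPolynomial (Fin N) F) _ (X i)

/-- A constant `c ∈ F` as an element of `F(x_1,…,x_N)`. -/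
def cf {N : ℕ} (c : F) : RatFunc' N F := algebraMap (MvPolynomial (Fin N) F) _ (MvPolynomial.C c)

/-- The coefficient `A_I(x;t)` with ambient index set `S`. -/
def Acoef {N : ℕ} (t : F) (S I : Finset (Fin N)) : RatFunc' N F :=
  cf (t ^ (I.card * (I.card - 1) / 2)) *
    ∏ i ∈ I, ∏ j ∈ S \ I, (cf t * xv i - xv j) / (xv i - xv j)

/-- The Macdonald operator `M_I^r` (in the variables `x_i`, `i ∈ I`),
acting on `F(x_1,…,x_N)`. -/
def Mr {N : ℕ} (q : F) (hq : q ≠ 0) (t : F) (I : Finset (Fin N)) (r : ℕ)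
    (f : RatFunc' N F) : RatFunc' N F :=
  ∑ I' ∈ powersetCard r I, Acoef t I I' * shiftOp N q hq I' f

/-- The generating Macdonald operator `M_I(Z;q,t) = Σ_r M_I^r Z^r`. -/
def MacOp {N : ℕ} (q : F) (hq : q ≠ 0) (t : F) (I : Finset (Fin N)) (Z : F)
    (f : RatFunc' N F) : RatFunc' N F :=
  ∑ r ∈ range (I.card + 1), cf (Z ^ r) * Mr q hq t I r f

/-- `e_N = x_1 ⋯ x_N`. -/
def eNprod (N : ℕ) : RatFunc' N F := ∏ i : Fin N, xv i

/-- The `k`-th elementary symmetric polynomial as an element of `F(x_1,…,x_N)`. -/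
def ekv (N k : ℕ) : RatFunc' N F :=
  ∑ I ∈ powersetCard k (univ : Finset (Fin N)), ∏ i ∈ I, xv i



section KeyIdentity
open Polynomial Finset

lemma prod_neg' {F ι : Type*} [CommRing F] (b : Finset ι) (a : ι → F) :
    ∏ j ∈ b, (-(a j)) = (-1) ^ b.card * ∏ j ∈ b, a j := by
  rw [← Finset.prod_const, ← Finset.prod_mul_distrib]
  simp

lemma coeff_one_prod {F ι : Type*} [Field F] [DecidableEq ι] (b : Finset ι) (a : ι → F) :
    (∏ j ∈ b, (Polynomial.X - Polynomial.C (a j))).coeff 1 = ∑ j ∈ b, ∏ l ∈ b.erase j, (-(a l)) := by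
  classical
  induction b using Finset.induction with
  | empty => simp [Polynomial.coeff_one]
  | @insert i b hi ih =>
    rw [Finset.prod_insert hi, sub_mul, Polynomial.coeff_sub, Polynomial.coeff_X_mul,
      Polynomial.coeff_C_mul, ih]
    have h0 : (∏ j ∈ b, (Polynomial.X - Polynomial.C (a j))).coeff 0 = ∏ j ∈ b, (-(a j)) := by
      rw [Polynomial.coeff_zero_eq_eval_zero, Polynomial.eval_prod]
      simp
    rw [h0, Finset.sum_insert hi, Finset.erase_insert hi, Finset.mul_sum,
      sub_eq_add_neg, ← Finset.sum_neg_distrib]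
    congr 1
    refine Finset.sum_congr rfl fun j hj => ?_
    rw [Finset.erase_insert_of_ne (by rintro rfl; exact hi hj),
      Finset.prod_insert (fun h => hi (Finset.erase_subset _ _ h))]
    ring

lemma coeff_one_basisDivisor_prod {F ι : Type*} [Field F] [DecidableEq ι]
    (b : Finset ι) (c : F) (a : ι → F) :
    (∏ j ∈ b, Lagrange.basisDivisor c (a j)).coeff 1
      = (∏ j ∈ b, (c - a j)⁻¹) * ∑ j ∈ b, ∏ l ∈ b.erase j, (-(a l)) := by
  unfold Lagrange.basisDivisor
  rw [Finset.prod_mul_distrib, ← map_prod, Polynomial.coeff_C_mul, coeff_one_prod]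

lemma prod_neg_mul {F ι : Type*} [Field F] (b : Finset ι) (t : F) (y : ι → F) :
    ∏ l ∈ b, (-(t * y l)) = (-1) ^ b.card * t ^ b.card * ∏ l ∈ b, y l := by
  rw [prod_neg', Finset.prod_mul_distrib, Finset.prod_const, mul_assoc]

lemma key_identity {F ι : Type*} [Field F] [DecidableEq ι] (t : F) (K : Finset ι) (y : ι → F)
    (hy0 : ∀ i ∈ K, y i ≠ 0)
    (hinj : ∀ i ∈ K, ∀ j ∈ K, y i = y j → i = j) :
    ∑ m ∈ K, ∏ i ∈ K.erase m, (y i * ((t * y i - y m) / (y i - y m)))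
      = t ^ (K.card - 1) * ∑ m ∈ K, ∏ i ∈ K.erase m, y i := by
  have hysub : ∀ i ∈ K, ∀ m ∈ K, i ≠ m → y i - y m ≠ 0 := by
    intro i hi m hm hne h
    exact hne (hinj i hi m hm (sub_eq_zero.mp h))
  by_cases ht1 : t = 1
  · subst ht1
    rw [one_pow, one_mul]
    refine Finset.sum_congr rfl fun m hm => Finset.prod_congr rfl fun i hi => ?_
    rw [one_mul, div_self (hysub i (Finset.mem_of_mem_erase hi) m hm (Finset.ne_of_mem_erase hi)),
      mul_one]
  rcases K.eq_empty_or_nonempty with rfl | hK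
  · simp
  have hn1 : 1 ≤ K.card := hK.card_pos
  set n := K.card with hn
  set e : F := ∑ m ∈ K, ∏ i ∈ K.erase m, y i with he
  set S : F := ∑ m ∈ K, ∏ i ∈ K.erase m, (y i * ((t * y i - y m) / (y i - y m))) with hS
  set v : Option ι → F := fun o => Option.elim o 0 y with hv
  set s : Finset (Option ι) := insert none (K.image some) with hs
  have hnone : (none : Option ι) ∉ K.image some := by simp
  have hsome_inj : Function.Injective (some : ι → Option ι) := Option.some_injective ι
  have hcards : s.card = n + 1 := by
    rw [hs, Finset.card_insert_of_notMem hnone, Finset.card_image_of_injective _ hsome_inj]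
  have hvs : Set.InjOn v s := by
    intro a ha b hb hab
    rw [hv] at hab
    cases a with
    | none =>
      cases b with
      | none => rfl
      | some j =>
        simp only [Option.elim] at hab
        exact absurd hab.symm (hy0 j (by simpa [hs] using hb))
    | some i =>
      cases b with
      | none =>
        simp only [Option.elim] at hab
        exact absurd hab (hy0 i (by simpa [hs] using ha))
      | some j =>
        simp only [Option.elim] at hab
        exact congrArg _ (hinj i (by simpa [hs] using ha) j (by simpa [hs] using hb) hab)
  set P : Polynomial F := ∏ i ∈ K, (Polynomial.X - Polynomial.C (t * y i)) with hP
  have hdegP : P.degree < (s.card : WithBot ℕ) := by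
    refine lt_of_le_of_lt (Polynomial.degree_prod_le _ _) ?_
    rw [hcards]
    calc ∑ i ∈ K, (Polynomial.X - Polynomial.C (t * y i)).degree
        ≤ ∑ _i ∈ K, (1 : WithBot ℕ) := by
          exact Finset.sum_le_sum fun i _ => le_of_eq (Polynomial.degree_X_sub_C _)
      _ = (n : WithBot ℕ) := by
          rw [Finset.sum_const, nsmul_eq_mul, mul_one, hn]
      _ < ((n + 1 : ℕ) : WithBot ℕ) := by
          exact_mod_cast Nat.lt_succ_self n
  have hinterp := Lagrange.eq_interpolate hvs hdegP
  have hC : P.coeff 1 = (Lagrange.interpolate s v fun i => P.eval (v i)).coeff 1 := by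
    rw [← hinterp]
  have hKprod : (∏ j ∈ K, y j) ≠ 0 := Finset.prod_ne_zero_iff.mpr hy0
  have hm1 : ((-1 : F) ^ n) ≠ 0 := pow_ne_zero _ (by norm_num)
  have himg : ∀ (b : Finset ι) (g : Option ι → F),
      ∏ j ∈ b.image some, g j = ∏ j ∈ b, g (some j) :=
    fun b g => Finset.prod_image (fun a _ c _ h => hsome_inj h)
  have himgs : ∀ (b : Finset ι) (g : Option ι → F),
      ∑ j ∈ b.image some, g j = ∑ j ∈ b, g (some j) :=
    fun b g => Finset.sum_image (fun a _ c _ h => hsome_inj h)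
  have hvnone : v none = 0 := rfl
  have hvsome : ∀ i, v (some i) = y i := fun _ => rfl
  have h1 : P.coeff 1 = (-1) ^ (n - 1) * t ^ (n - 1) * e := by
    rw [hP, coeff_one_prod, he, Finset.mul_sum]
    refine Finset.sum_congr rfl fun j hj => ?_
    rw [prod_neg_mul, Finset.card_erase_of_mem hj]
  have hterm_none : P.eval (v none) * (Lagrange.basis s v none).coeff 1
      = (-1) ^ (n - 1) * (t ^ n * e) := by
    have hseq : s.erase none = K.image some := by rw [hs]; exact Finset.erase_insert hnone
    have heval : P.eval (v none) = (-1) ^ n * t ^ n * ∏ i ∈ K, y i := by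
      rw [hvnone, hP, Polynomial.eval_prod, ← prod_neg_mul]
      refine Finset.prod_congr rfl fun i _ => ?_
      simp
    have hcoeff : (Lagrange.basis s v none).coeff 1
        = ((-1) ^ n * ∏ j ∈ K, y j)⁻¹ * ((-1) ^ (n - 1) * e) := by
      rw [Lagrange.basis, hseq, coeff_one_basisDivisor_prod, himg, himgs]
      congr 1
      · simp only [hvnone, hvsome, zero_sub]
        rw [Finset.prod_inv_distrib, prod_neg']
      · rw [he, Finset.mul_sum]
        refine Finset.sum_congr rfl fun j hj => ?_
        rw [← Finset.image_erase hsome_inj, himg]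
        simp only [hvsome]
        rw [prod_neg', Finset.card_erase_of_mem hj]
    rw [heval, hcoeff]
    field_simp
  have hterm_some : ∀ m ∈ K, P.eval (v (some m)) * (Lagrange.basis s v (some m)).coeff 1
      = (1 - t) * ((-1) ^ (n - 1) * ∏ i ∈ K.erase m, (y i * ((t * y i - y m) / (y i - y m)))) := by
    intro m hm
    have hym : y m ≠ 0 := hy0 m hm
    have hnone2 : (none : Option ι) ∉ (K.erase m).image some := by simp
    have hseq : s.erase (some m) = insert none ((K.erase m).image some) := by
      rw [hs, Finset.erase_insert_of_ne (by simp), Finset.image_erase hsome_inj]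
    have heval : P.eval (v (some m))
        = ((1 - t) * y m) * ∏ i ∈ K.erase m, (y m - t * y i) := by
      rw [hvsome, hP, Polynomial.eval_prod]
      simp only [Polynomial.eval_sub, Polynomial.eval_X, Polynomial.eval_C]
      rw [← Finset.mul_prod_erase K _ hm]
      congr 1
      ring
    have hcoeff : (Lagrange.basis s v (some m)).coeff 1
        = ((y m)⁻¹ * ∏ i ∈ K.erase m, (y m - y i)⁻¹) * ∏ i ∈ K.erase m, (-(y i)) := by
      rw [Lagrange.basis, hseq, coeff_one_basisDivisor_prod]
      rw [Finset.prod_insert hnone2, Finset.sum_insert hnone2, Finset.erase_insert hnone2]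
      have hzero : ∑ j ∈ (K.erase m).image some,
          ∏ l ∈ (insert none ((K.erase m).image some)).erase j, (-(v l)) = 0 := by
        rw [himgs]
        refine Finset.sum_eq_zero fun i hi => ?_
        refine Finset.prod_eq_zero (i := (none : Option ι)) ?_ ?_
        · exact Finset.mem_erase.mpr ⟨by simp, Finset.mem_insert_self _ _⟩
        · rw [hvnone, neg_zero]
      rw [hzero, add_zero, himg, himg]
      simp only [hvsome, hvnone, sub_zero]
    have hprodeq : ∏ i ∈ K.erase m, ((y m - t * y i) * ((y m - y i)⁻¹ * (-(y i))))
        = (-1) ^ (n - 1) * ∏ i ∈ K.erase m, (y i * ((t * y i - y m) / (y i - y m))) := by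
      have hfac : ∀ i ∈ K.erase m, (y m - t * y i) * ((y m - y i)⁻¹ * (-(y i)))
          = (-1) * (y i * ((t * y i - y m) / (y i - y m))) := by
        intro i hi
        have hne : y i - y m ≠ 0 :=
          hysub i (Finset.mem_of_mem_erase hi) m hm (Finset.ne_of_mem_erase hi)
        have hne' : y m - y i ≠ 0 := sub_ne_zero.mpr (Ne.symm (sub_ne_zero.mp hne))
        field_simp
        ring
      rw [Finset.prod_congr rfl hfac, Finset.prod_mul_distrib, Finset.prod_const,
        Finset.card_erase_of_mem hm]
    rw [heval, hcoeff]
    calc ((1 - t) * y m * ∏ i ∈ K.erase m, (y m - t * y i)) *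
          (((y m)⁻¹ * ∏ i ∈ K.erase m, (y m - y i)⁻¹) * ∏ i ∈ K.erase m, (-(y i)))
        = (y m * (y m)⁻¹) *
            ((1 - t) * ∏ i ∈ K.erase m, ((y m - t * y i) * ((y m - y i)⁻¹ * (-(y i))))) := by
          rw [Finset.prod_mul_distrib, Finset.prod_mul_distrib]
          ring
      _ = (1 - t) * ((-1) ^ (n - 1) * ∏ i ∈ K.erase m, (y i * ((t * y i - y m) / (y i - y m)))) := by
          rw [mul_inv_cancel₀ hym, one_mul, hprodeq]
  have h2 : (Lagrange.interpolate s v fun i => P.eval (v i)).coeff 1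
      = (-1) ^ (n - 1) * (t ^ n * e) + (1 - t) * ((-1) ^ (n - 1) * S) := by
    rw [Lagrange.interpolate_apply, Polynomial.finset_sum_coeff]
    simp only [Polynomial.coeff_C_mul]
    rw [hs, Finset.sum_insert hnone, Finset.sum_image (fun a _ b _ h => hsome_inj h)]
    rw [← hs, hterm_none]
    congr 1
    rw [hS, Finset.mul_sum, Finset.mul_sum]
    exact Finset.sum_congr rfl fun m hm => hterm_some m hm
  have E : t ^ (n - 1) * e = t ^ n * e + (1 - t) * S := by
    have hne : ((-1 : F) ^ (n - 1)) ≠ 0 := pow_ne_zero _ (by norm_num)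
    refine mul_left_cancel₀ hne ?_
    have := h1.symm.trans (hC.trans h2)
    linear_combination this
  have h1t : (1 : F) - t ≠ 0 := sub_ne_zero.mpr (Ne.symm ht1)
  refine mul_left_cancel₀ h1t ?_
  have htn : t ^ n = t ^ (n - 1) * t := by
    rw [← pow_succ]
    congr 1
    omega
  rw [htn] at E
  linear_combination -E

end KeyIdentity

section Infra

open MvPolynomial Finset

variable {F : Type*} [Field F] {N : ℕ}

lemma shiftOp_algebraMap (q : F) (hq : q ≠ 0) (S : Finset (Fin N)) (p : MvPolynomial (Fin N) F) :
    shiftOp N q hq S (algebraMap (MvPolynomial (Fin N) F) (RatFunc' N F) p)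
      = algebraMap (MvPolynomial (Fin N) F) (RatFunc' N F) (scaleAlg N q hq S p) :=
  IsFractionRing.ringEquivOfRingEquiv_algebraMap _ p

lemma scaleAlg_X (q : F) (hq : q ≠ 0) (S : Finset (Fin N)) (i : Fin N) :
    scaleAlg N q hq S (X i) = if i ∈ S then MvPolynomial.C q * X i else X i := by
  simp [scaleAlg]

lemma shiftOp_xv (q : F) (hq : q ≠ 0) (S : Finset (Fin N)) (i : Fin N) :
    shiftOp N q hq S (xv i : RatFunc' N F) = (if i ∈ S then cf q else 1) * xv i := by
  rw [xv, shiftOp_algebraMap, scaleAlg_X]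
  split_ifs with h
  · rw [map_mul]; rfl
  · rw [one_mul]

lemma shiftOp_cf (q : F) (hq : q ≠ 0) (S : Finset (Fin N)) (c : F) :
    shiftOp N q hq S (cf c : RatFunc' N F) = cf c := by
  rw [cf, shiftOp_algebraMap]
  congr 1
  simp [scaleAlg]

lemma shiftOp_monomial (q : F) (hq : q ≠ 0) (S : Finset (Fin N)) (I : Finset (Fin N)) :
    shiftOp N q hq S (∏ i ∈ I, xv i : RatFunc' N F)
      = cf (q ^ (I ∩ S).card) * ∏ i ∈ I, xv i := by
  rw [map_prod]
  have h : ∀ i ∈ I, shiftOp N q hq S (xv i : RatFunc' N F) = (if i ∈ S then cf q else 1) * xv i :=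
    fun i _ => shiftOp_xv q hq S i
  rw [Finset.prod_congr rfl h, Finset.prod_mul_distrib, Finset.prod_ite_mem, Finset.prod_const]
  congr 1
  rw [cf, cf, ← map_pow, ← map_pow]

lemma ratfunc_algebraMap_injective :
    Function.Injective (algebraMap (MvPolynomial (Fin N) F) (RatFunc' N F)) :=
  IsFractionRing.injective _ _

lemma cf_ne_zero {c : F} (hc : c ≠ 0) : (cf c : RatFunc' N F) ≠ 0 := by
  rw [cf, ← map_zero (algebraMap (MvPolynomial (Fin N) F) (RatFunc' N F))]
  exact fun h => hc (by simpa using ratfunc_algebraMap_injective h)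

lemma xv_ne_zero (i : Fin N) : (xv i : RatFunc' N F) ≠ 0 := by
  rw [xv, ← map_zero (algebraMap (MvPolynomial (Fin N) F) (RatFunc' N F))]
  intro h
  have := ratfunc_algebraMap_injective h
  exact MvPolynomial.X_ne_zero i this

lemma xv_inj {i j : Fin N} (h : (xv i : RatFunc' N F) = xv j) : i = j := by
  rw [xv, xv] at h
  have := ratfunc_algebraMap_injective h
  exact MvPolynomial.X_injective this

lemma cf_mul (a b : F) : (cf (a * b) : RatFunc' N F) = cf a * cf b := by
  rw [cf, cf, cf, map_mul, map_mul]

lemma cf_one : (cf 1 : RatFunc' N F) = 1 := by rw [cf, map_one, map_one]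

lemma MacOp_eq (q : F) (hq : q ≠ 0) (t : F) (I : Finset (Fin N)) (Z : F) (f : RatFunc' N F) :
    MacOp q hq t I Z f
      = ∑ J ∈ I.powerset, cf (Z ^ J.card) * (Acoef t I J * shiftOp N q hq J f) := by
  rw [MacOp, Finset.powerset_card_disjiUnion]
  erw [Finset.sum_disjiUnion]
  refine Finset.sum_congr rfl fun r hr => ?_
  rw [Mr, Finset.mul_sum]
  refine Finset.sum_congr rfl fun J hJ => ?_
  rw [(Finset.mem_powersetCard.mp hJ).2]

end Infra


section PerJ

open MvPolynomial Finset

variable {F : Type*} [Field F]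

lemma cf_pow {N : ℕ} (a : F) (n : ℕ) : (cf (a ^ n) : RatFunc' N F) = (cf a) ^ n := by
  rw [cf, cf, map_pow, map_pow]

lemma cf_add {N : ℕ} (a b : F) : (cf (a + b) : RatFunc' N F) = cf a + cf b := by
  rw [cf, cf, cf, MvPolynomial.C_add, map_add]

lemma perJ {k : ℕ} (q t : F) (hq : q ≠ 0) (ht : t ≠ 0) (hq1 : q ≠ 1)
    (f : RatFunc' (k + 1) F) (J : Finset (Fin (k + 1))) :
    cf (1 - q⁻¹)⁻¹ * (cf ((-q⁻¹) ^ J.card) *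
        (Acoef t univ J * shiftOp (k + 1) q hq J (ekv (k + 1) k * f)))
      = (∑ I ∈ (powersetCard k (univ : Finset (Fin (k + 1)))).filter (fun I => J ⊆ I),
          (cf (t⁻¹ ^ k) * ∏ i ∈ I, ∏ j ∈ univ \ I, (cf t * xv i - xv j) / (xv i - xv j)) *
            ((∏ i ∈ I, xv i) * (cf ((-t) ^ J.card) * (Acoef t I J * shiftOp (k + 1) q hq J f))))
        + cf (q - 1)⁻¹ * (cf ((-1) ^ J.card) *
            (ekv (k + 1) k * (Acoef t univ J * shiftOp (k + 1) q hq J f))) := by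
  classical
  set U : Finset (Fin (k + 1)) := univ with hU
  set s : ℕ := J.card with hs
  set K : Finset (Fin (k + 1)) := U \ J with hK
  set sh : RatFunc' (k + 1) F := shiftOp (k + 1) q hq J f with hsh
  have hJU : J ⊆ U := Finset.subset_univ J
  have hcardU : U.card = k + 1 := by simp [hU]
  have hcardJK : s + K.card = k + 1 := by
    rw [hK, Finset.card_sdiff_of_subset hJU, hcardU, hs]
    have := Finset.card_le_card hJU
    omega
  have herase_inj : ∀ (a b : Fin (k + 1)), U.erase a = U.erase b → a = b := by
    intro a b h
    by_contra hne
    have h2 : a ∈ U.erase b := Finset.mem_erase.mpr ⟨hne, Finset.mem_univ a⟩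
    rw [← h] at h2
    exact Finset.notMem_erase a U h2
  have herase_card : ∀ m : Fin (k + 1), (U.erase m).card = k := by
    intro m
    rw [Finset.card_erase_of_mem (Finset.mem_univ m), hcardU]
    omega
  have himage : powersetCard k U = U.image (fun m => U.erase m) := by
    ext I
    simp only [Finset.mem_powersetCard, Finset.mem_image]
    constructor
    · rintro ⟨hIU, hIc⟩
      have hcompl : (U \ I).card = 1 := by
        rw [Finset.card_sdiff_of_subset hIU, hcardU, hIc]
        omega
      obtain ⟨m, hm⟩ := Finset.card_eq_one.mp hcompl
      refine ⟨m, Finset.mem_univ m, ?_⟩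
      rw [Finset.erase_eq, ← hm, Finset.sdiff_sdiff_eq_self hIU]
    · rintro ⟨m, -, rfl⟩
      exact ⟨Finset.erase_subset _ _, herase_card m⟩
  have hfilter : (powersetCard k U).filter (fun I => J ⊆ I) = K.image (fun m => U.erase m) := by
    rw [himage, hK]
    ext I
    simp only [Finset.mem_filter, Finset.mem_image, Finset.mem_sdiff]
    constructor
    · rintro ⟨⟨m, hm, rfl⟩, hJI⟩
      exact ⟨m, ⟨Finset.mem_univ m, fun hmJ => Finset.notMem_erase m U (hJI hmJ)⟩, rfl⟩
    · rintro ⟨m, ⟨-, hmJ⟩, rfl⟩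
      exact ⟨⟨m, Finset.mem_univ m, rfl⟩,
        fun x hx => Finset.mem_erase.mpr ⟨fun h => hmJ (h ▸ hx), Finset.mem_univ x⟩⟩
  have hekv : (ekv (k + 1) k : RatFunc' (k + 1) F) = ∑ m ∈ U, ∏ i ∈ U.erase m, xv i := by
    rw [ekv, himage, Finset.sum_image (fun a _ b _ h => herase_inj a b h)]
  have hshe : shiftOp (k + 1) q hq J (ekv (k + 1) k)
      = ∑ m ∈ U, cf (q ^ ((U.erase m ∩ J).card)) * ∏ i ∈ U.erase m, xv i := by
    rw [hekv, map_sum]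
    exact Finset.sum_congr rfl fun m _ => shiftOp_monomial q hq J (U.erase m)
  -- scalar facts
  have hq1' : q - 1 ≠ 0 := sub_ne_zero.mpr hq1
  have h1qeq : 1 - q⁻¹ = (q - 1) * q⁻¹ := by field_simp
  have h1q' : 1 - q⁻¹ ≠ 0 := by rw [h1qeq]; exact mul_ne_zero hq1' (inv_ne_zero hq)
  have hqq : ∀ a : ℕ, (q⁻¹) ^ a * q ^ a = 1 := by
    intro a; rw [← mul_pow, inv_mul_cancel₀ hq, one_pow]
  have e1 : (1 - q⁻¹)⁻¹ * q⁻¹ = (q - 1)⁻¹ := by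
    rw [h1qeq, mul_inv, inv_inv]
    field_simp
  have e2 : (1 - q⁻¹)⁻¹ = (q - 1)⁻¹ + 1 := by
    rw [h1qeq, mul_inv, inv_inv]
    field_simp
    ring
  have fact1 : ∀ a : ℕ, (1 - q⁻¹)⁻¹ * ((-q⁻¹) ^ (a + 1) * q ^ a) = (q - 1)⁻¹ * (-1) ^ (a + 1) := by
    intro a
    calc (1 - q⁻¹)⁻¹ * ((-q⁻¹) ^ (a + 1) * q ^ a)
        = ((1 - q⁻¹)⁻¹ * q⁻¹) * (-1) ^ (a + 1) * ((q⁻¹) ^ a * q ^ a) := by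
          rw [neg_pow, pow_succ]
          ring
      _ = (q - 1)⁻¹ * (-1) ^ (a + 1) := by rw [e1, hqq, mul_one]
  have fact2 : (1 - q⁻¹)⁻¹ * ((-q⁻¹) ^ s * q ^ s) = (q - 1)⁻¹ * (-1) ^ s + (-1) ^ s := by
    calc (1 - q⁻¹)⁻¹ * ((-q⁻¹) ^ s * q ^ s)
        = (1 - q⁻¹)⁻¹ * (-1) ^ s * ((q⁻¹) ^ s * q ^ s) := by rw [neg_pow]; ring
      _ = ((q - 1)⁻¹ + 1) * (-1) ^ s * 1 := by rw [e2, hqq]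
      _ = (q - 1)⁻¹ * (-1) ^ s + (-1) ^ s := by ring
  -- per-m set facts
  have hdisjJK : Disjoint J K := by rw [hK]; exact Finset.disjoint_sdiff
  have hdisj : ∀ m : Fin (k + 1), Disjoint J (K.erase m) :=
    fun m => hdisjJK.mono_right (Finset.erase_subset m K)
  have f1 : ∀ m : Fin (k + 1), U \ U.erase m = {m} := by
    intro m
    ext i
    simp only [hU, Finset.mem_sdiff, Finset.mem_erase, Finset.mem_univ, true_and, and_true,
      Finset.mem_singleton, not_and, not_not]
  have hmJK : ∀ m ∈ K, m ∉ J := by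
    intro m hm
    have hm' : m ∈ U \ J := by rw [← hK]; exact hm
    exact (Finset.mem_sdiff.mp hm').2
  have hJK : J ∪ K = U := by rw [hK]; exact Finset.union_sdiff_of_subset hJU
  have f2 : ∀ m ∈ K, U.erase m = J ∪ K.erase m := by
    intro m hm
    rw [← hJK, Finset.erase_union_distrib, Finset.erase_eq_of_notMem (hmJK m hm)]
  have f3 : ∀ m ∈ K, U.erase m \ J = K.erase m := by
    intro m hm
    rw [hK, ← Finset.erase_sdiff_comm]
  have f4 : ∀ m ∈ K, U \ J = insert m (K.erase m) := by
    intro m hm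
    rw [← hK]
    exact (Finset.insert_erase hm).symm
  have hxsplit : ∀ m ∈ K, (∏ i ∈ U.erase m, (xv i : RatFunc' (k + 1) F))
      = (∏ i ∈ J, xv i) * ∏ i ∈ K.erase m, xv i := by
    intro m hm
    rw [f2 m hm, Finset.prod_union (hdisj m)]
  -- the common factor w
  set w : Fin (k + 1) → RatFunc' (k + 1) F :=
    fun m => (∏ i ∈ U.erase m, xv i) * (Acoef t U J * sh) with hw
  have hL : cf (1 - q⁻¹)⁻¹ * (cf ((-q⁻¹) ^ s) *
        (Acoef t U J * shiftOp (k + 1) q hq J (ekv (k + 1) k * f)))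
      = ∑ m ∈ U, cf ((1 - q⁻¹)⁻¹ * ((-q⁻¹) ^ s * q ^ ((U.erase m ∩ J).card))) * w m := by
    rw [map_mul, hshe, ← hsh, Finset.sum_mul, Finset.mul_sum, Finset.mul_sum, Finset.mul_sum]
    refine Finset.sum_congr rfl fun m hm => ?_
    rw [cf_mul, cf_mul]
    simp only [hw]
    ring
  have hC : cf (q - 1)⁻¹ * (cf ((-1) ^ s) * (ekv (k + 1) k * (Acoef t U J * sh)))
      = ∑ m ∈ U, cf ((q - 1)⁻¹ * (-1) ^ s) * w m := by
    rw [hekv, Finset.sum_mul, Finset.mul_sum, Finset.mul_sum]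
    refine Finset.sum_congr rfl fun m hm => ?_
    rw [cf_mul]
    simp only [hw]
    ring
  have hsplitc : ∀ m ∈ U, cf ((1 - q⁻¹)⁻¹ * ((-q⁻¹) ^ s * q ^ ((U.erase m ∩ J).card)))
        - cf ((q - 1)⁻¹ * (-1) ^ s)
      = if m ∈ J then 0 else (cf ((-1) ^ s : F) : RatFunc' (k + 1) F) := by
    intro m _
    have hIJ : U.erase m ∩ J = J.erase m := by
      ext i
      simp only [hU, Finset.mem_inter, Finset.mem_erase, Finset.mem_univ, and_true, true_and]
    rw [hIJ]
    split_ifs with h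
    · obtain ⟨a, ha⟩ : ∃ a, s = a + 1 := ⟨s - 1, by
        have := Finset.card_pos.mpr ⟨m, h⟩
        rw [hs]; omega⟩
      rw [Finset.card_erase_of_mem h, ← hs, ha, Nat.add_sub_cancel, fact1 a, sub_self]
    · rw [Finset.erase_eq_of_notMem h, ← hs, fact2, cf_add, add_sub_cancel_left]
  have hLC : cf (1 - q⁻¹)⁻¹ * (cf ((-q⁻¹) ^ s) *
        (Acoef t U J * shiftOp (k + 1) q hq J (ekv (k + 1) k * f)))
        - cf (q - 1)⁻¹ * (cf ((-1) ^ s) * (ekv (k + 1) k * (Acoef t U J * sh)))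
      = ∑ m ∈ K, cf ((-1) ^ s : F) * w m := by
    rw [hL, hC, ← Finset.sum_sub_distrib]
    have step1 : ∀ m ∈ U, cf ((1 - q⁻¹)⁻¹ * ((-q⁻¹) ^ s * q ^ ((U.erase m ∩ J).card))) * w m
          - cf ((q - 1)⁻¹ * (-1) ^ s) * w m
        = if m ∈ J then 0 else cf ((-1) ^ s : F) * w m := by
      intro m hm
      rw [← sub_mul, hsplitc m hm, ite_mul, zero_mul]
    rw [Finset.sum_congr rfl step1]
    have hKf : K = U.filter (fun m => ¬ m ∈ J) := by rw [hK, Finset.sdiff_eq_filter]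
    rw [hKf, Finset.sum_filter]
    refine Finset.sum_congr rfl fun m _ => ?_
    by_cases h : m ∈ J <;> simp [h]
  -- the key-identity based sum
  have hmain : ∑ m ∈ K, (cf (t ^ s * t⁻¹ ^ k) *
        ((∏ i ∈ K.erase m, xv i) *
          ∏ i ∈ K.erase m, ((cf t * xv i - xv m) / (xv i - xv m))))
      = ∑ m ∈ K, ∏ i ∈ K.erase m, (xv i : RatFunc' (k + 1) F) := by
    rcases K.eq_empty_or_nonempty with hKe | hKne
    · simp [hKe]
    have hkey := key_identity (cf t : RatFunc' (k + 1) F) K (fun i => xv i)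
        (fun i _ => xv_ne_zero i) (fun i _ j _ h => xv_inj h)
    have hτ : (cf (t ^ s * t⁻¹ ^ k) : RatFunc' (k + 1) F) * (cf t) ^ (K.card - 1) = 1 := by
      rw [← cf_pow, ← cf_mul]
      have hsc : t ^ s * t⁻¹ ^ k * t ^ (K.card - 1) = 1 := by
        rw [inv_pow]
        have h1 : t ^ s * t ^ (K.card - 1) = t ^ k := by
          rw [← pow_add]
          congr 1
          have := hKne.card_pos
          omega
        calc t ^ s * (t ^ k)⁻¹ * t ^ (K.card - 1)
            = t ^ s * t ^ (K.card - 1) * (t ^ k)⁻¹ := by ring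
          _ = 1 := by rw [h1, mul_inv_cancel₀ (pow_ne_zero _ ht)]
      rw [hsc, cf_one]
    calc ∑ m ∈ K, (cf (t ^ s * t⁻¹ ^ k) *
          ((∏ i ∈ K.erase m, xv i) *
            ∏ i ∈ K.erase m, ((cf t * xv i - xv m) / (xv i - xv m))))
        = cf (t ^ s * t⁻¹ ^ k) *
            ∑ m ∈ K, ∏ i ∈ K.erase m, ((xv i : RatFunc' (k + 1) F) *
              ((cf t * xv i - xv m) / (xv i - xv m))) := by
          rw [Finset.mul_sum]
          refine Finset.sum_congr rfl fun m hm => ?_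
          rw [Finset.prod_mul_distrib]
      _ = cf (t ^ s * t⁻¹ ^ k) *
            ((cf t) ^ (K.card - 1) * ∑ m ∈ K, ∏ i ∈ K.erase m, xv i) := by rw [hkey]
      _ = ∑ m ∈ K, ∏ i ∈ K.erase m, xv i := by rw [← mul_assoc, hτ, one_mul]
  -- per-m identification of the RHS1 summand
  have hterm : ∀ m ∈ K,
      (cf (t⁻¹ ^ k) * ∏ i ∈ U.erase m, ∏ j ∈ U \ U.erase m,
          (cf t * xv i - xv j) / (xv i - xv j)) *
        ((∏ i ∈ U.erase m, xv i) * (cf ((-t) ^ s) * (Acoef t (U.erase m) J * sh)))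
      = (cf ((-1) ^ s : F) * ((∏ i ∈ J, xv i) * (Acoef t U J * sh))) *
          (cf (t ^ s * t⁻¹ ^ k) * ((∏ i ∈ K.erase m, xv i) *
            ∏ i ∈ K.erase m, ((cf t * xv i - xv m) / (xv i - xv m)))) := by
    intro m hm
    have hQsplit : ∏ i ∈ U.erase m, ((cf t * xv i - xv m) / (xv i - xv m))
        = (∏ i ∈ J, ((cf t * xv i - xv m) / (xv i - xv m))) *
            ∏ i ∈ K.erase m, ((cf t * xv i - xv m) / (xv i - xv m)) := by
      rw [f2 m hm, Finset.prod_union (hdisj m)]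
    have hAspl : Acoef t U J = Acoef t (U.erase m) J *
        ∏ i ∈ J, ((cf t * xv i - xv m) / (xv i - xv m)) := by
      simp only [Acoef, f3 m hm, f4 m hm,
        Finset.prod_insert (Finset.notMem_erase m K), Finset.prod_mul_distrib]
      ring
    rw [f1 m]
    simp only [Finset.prod_singleton]
    rw [hQsplit, hxsplit m hm, hAspl, cf_mul, neg_pow, cf_mul]
    ring
  have hR : (∑ I ∈ (powersetCard k U).filter (fun I => J ⊆ I),
        (cf (t⁻¹ ^ k) * ∏ i ∈ I, ∏ j ∈ U \ I, (cf t * xv i - xv j) / (xv i - xv j)) *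
          ((∏ i ∈ I, xv i) * (cf ((-t) ^ s) * (Acoef t I J * sh))))
      = ∑ m ∈ K, cf ((-1) ^ s : F) * w m := by
    rw [hfilter, Finset.sum_image (fun a _ b _ h => herase_inj a b h)]
    rw [Finset.sum_congr rfl hterm, ← Finset.mul_sum, hmain, Finset.mul_sum]
    refine Finset.sum_congr rfl fun m hm => ?_
    simp only [hw]
    rw [hxsplit m hm]
    ring
  linear_combination hLC - hR

end PerJ

/-- In `N = k+1` variables, the operator identity
`(1-q^{-1})^{-1} M_{k+1}(-q^{-1};q,t) ∘ (mult. by e_k)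
  = Σ_{|I|=k} (mult. by Ã_I x_I) ∘ M_I(-t;q,t) + (q-1)^{-1} (mult. by e_k) ∘ M_{k+1}(-1;q,t)`,
i.e. `B_k^+ = B̃_k^+ + (q-1)^{-1} e_k M_{k+1}(-1;q,t)` when `N = k+1`. -/
theorem Bplus_eq_Btilde_add_correction_of_N_eq_k_add_one {F : Type*} [Field F] {k : ℕ}
    (q t : F) (hq : q ≠ 0) (ht : t ≠ 0) (hq1 : q ≠ 1) (f : RatFunc' (k + 1) F) :
    cf (1 - q⁻¹)⁻¹ * MacOp q hq t (univ : Finset (Fin (k + 1))) (-q⁻¹) (ekv (k + 1) k * f)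
      = (∑ I ∈ powersetCard k (univ : Finset (Fin (k + 1))),
          (cf (t⁻¹ ^ k) * ∏ i ∈ I, ∏ j ∈ univ \ I, (cf t * xv i - xv j) / (xv i - xv j)) *
            ((∏ i ∈ I, xv i) * MacOp q hq t I (-t) f))
        + cf (q - 1)⁻¹ * (ekv (k + 1) k * MacOp q hq t (univ : Finset (Fin (k + 1))) (-1) f) := by
  classical
  rw [MacOp_eq q hq t univ (-q⁻¹) (ekv (k + 1) k * f), MacOp_eq q hq t univ (-1) f]
  have hexp : ∀ I ∈ powersetCard k (univ : Finset (Fin (k + 1))),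
      (cf (t⁻¹ ^ k) * ∏ i ∈ I, ∏ j ∈ univ \ I, (cf t * xv i - xv j) / (xv i - xv j)) *
          ((∏ i ∈ I, xv i) * MacOp q hq t I (-t) f)
        = ∑ J ∈ I.powerset,
            (cf (t⁻¹ ^ k) * ∏ i ∈ I, ∏ j ∈ univ \ I, (cf t * xv i - xv j) / (xv i - xv j)) *
              ((∏ i ∈ I, xv i) *
                (cf ((-t) ^ J.card) * (Acoef t I J * shiftOp (k + 1) q hq J f))) := by
    intro I hI
    rw [MacOp_eq, Finset.mul_sum, Finset.mul_sum]
  rw [Finset.sum_congr rfl hexp]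
  have hswap : (∑ I ∈ powersetCard k (univ : Finset (Fin (k + 1))), ∑ J ∈ I.powerset,
        (cf (t⁻¹ ^ k) * ∏ i ∈ I, ∏ j ∈ univ \ I, (cf t * xv i - xv j) / (xv i - xv j)) *
          ((∏ i ∈ I, xv i) *
            (cf ((-t) ^ J.card) * (Acoef t I J * shiftOp (k + 1) q hq J f))))
      = ∑ J ∈ (univ : Finset (Fin (k + 1))).powerset,
          ∑ I ∈ (powersetCard k (univ : Finset (Fin (k + 1)))).filter (fun I => J ⊆ I),
            (cf (t⁻¹ ^ k) * ∏ i ∈ I, ∏ j ∈ univ \ I, (cf t * xv i - xv j) / (xv i - xv j)) *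
              ((∏ i ∈ I, xv i) *
                (cf ((-t) ^ J.card) * (Acoef t I J * shiftOp (k + 1) q hq J f))) := by
    refine Finset.sum_comm' ?_
    intro I J
    constructor
    · rintro ⟨hI, hJ⟩
      exact ⟨Finset.mem_filter.mpr ⟨hI, Finset.mem_powerset.mp hJ⟩,
        Finset.mem_powerset.mpr (Finset.subset_univ J)⟩
    · rintro ⟨hI, -⟩
      exact ⟨(Finset.mem_filter.mp hI).1,
        Finset.mem_powerset.mpr (Finset.mem_filter.mp hI).2⟩
  rw [hswap]
  have hL0 : cf (1 - q⁻¹)⁻¹ * (∑ J ∈ (univ : Finset (Fin (k + 1))).powerset,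
        cf ((-q⁻¹) ^ J.card) * (Acoef t univ J * shiftOp (k + 1) q hq J (ekv (k + 1) k * f)))
      = ∑ J ∈ (univ : Finset (Fin (k + 1))).powerset,
          cf (1 - q⁻¹)⁻¹ * (cf ((-q⁻¹) ^ J.card) *
            (Acoef t univ J * shiftOp (k + 1) q hq J (ekv (k + 1) k * f))) :=
    Finset.mul_sum _ _ _
  have hC0 : cf (q - 1)⁻¹ * (ekv (k + 1) k * (∑ J ∈ (univ : Finset (Fin (k + 1))).powerset,
        cf ((-1) ^ J.card) * (Acoef t univ J * shiftOp (k + 1) q hq J f)))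
      = ∑ J ∈ (univ : Finset (Fin (k + 1))).powerset,
          cf (q - 1)⁻¹ * (cf ((-1) ^ J.card) *
            (ekv (k + 1) k * (Acoef t univ J * shiftOp (k + 1) q hq J f))) := by
    rw [Finset.mul_sum, Finset.mul_sum]
    exact Finset.sum_congr rfl fun J _ => by ring
  rw [hL0, hC0, ← Finset.sum_add_distrib]
  exact Finset.sum_congr rfl fun J _ => perJ q t hq ht hq1 f J

end
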